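/- Let n ≥ 2, let x_1 < ⋯ < x_n be real and m_1, …, m_n > 0, set l_k = x_{k+1} − x_k, let S(z) = G_n(z) L_{n−1} G_{n−1}(z) ⋯ L_1 G_1(z), let (C, B, A)ᵗ = S(z)(1,0,0)ᵗ, define W(z) = B(z)/A(z), Z(z) = C(z)/A(z), W*(z) = −W(−z) and Z*(z) = Z(−z), and for fixed 0 ≤ k ≤ n−1 let a(z) = a^{(2k+1)}(z) be the product of the leftmost 2k+1 factors of S(z). Then, as real functions of z as z → ∞, for each column j = 1, 2, 3: a_{3j}(z) Z*(z) + a_{2j}(z) W*(z) + a_{1j}(z) = O(z^{−(k+1)}). -/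

import Mathlib

open Polynomial Matrix

/-- The transfer matrix `L_k` of the discrete cubic string (with gap `l`). -/
noncomputable def Lmat (l : ℝ) : Matrix (Fin 3) (Fin 3) (Polynomial ℝ) :=
  !![1, Polynomial.C l, Polynomial.C (l ^ 2 / 2);
     0, 1, Polynomial.C l;
     0, 0, 1]

/-- The transfer matrix `G_k(z)` of the discrete cubic string (with mass `m`). -/
noncomputable def Gmat (m : ℝ) : Matrix (Fin 3) (Fin 3) (Polynomial ℝ) :=
  !![1, 0, 0;
     0, 1, 0;
     Polynomial.C (-2 * m) * Polynomial.X, 0, 1]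

/-- The transition matrix `S(z) = G_n(z) L_{n−1} G_{n−1}(z) ⋯ L_1 G_1(z)` of the
discrete cubic string with masses `m 1, …, m n` and gaps `l 1, …, l (n−1)`. -/
noncomputable def transMat (m l : ℕ → ℝ) : ℕ → Matrix (Fin 3) (Fin 3) (Polynomial ℝ)
  | 0 => 1
  | 1 => Gmat (m 1)
  | (k + 2) => Gmat (m (k + 2)) * Lmat (l (k + 1)) * transMat m l (k + 1)

/-- `aMat m l n k` is `a^{(2k+1)}(z) = G_n(z) L_{n−1} G_{n−1}(z) ⋯ L_{n−k} G_{n−k}(z)`,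
the product of the leftmost `2k+1` factors of the transition matrix. -/
noncomputable def aMat (m l : ℕ → ℝ) (n : ℕ) : ℕ → Matrix (Fin 3) (Fin 3) (Polynomial ℝ)
  | 0 => Gmat (m n)
  | (k + 1) => aMat m l n k * Lmat (l (n - (k + 1))) * Gmat (m (n - (k + 1)))

open Filter Asymptotics

/-! Write `p^σ(z) = p(−z)` and `J = antidiag(1, −1, 1)`. Every factor `G_j`, `L_j` satisfies
`(M^σ)ᵀ J M = J`, hence so does `a`. Splitting `S = a P` with
`P = L_{n−k−1} G_{n−k−1} ⋯ L_1 G_1` gives `(S^σ)ᵀ J a = (P^σ)ᵀ J`, whose first row says that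
`A(−z) (a_{3j} Z* + a_{2j} W* + a_{1j}) = C(−z) a_{3j} − B(−z) a_{2j} + A(−z) a_{1j}`
is a polynomial of degree at most `deg P = n − 1 − k`. Since the `l_j` and `m_j` are nonzero,
`A` has degree exactly `n`, so the quotient is `O(z^{−(k+1)})`. -/

noncomputable def formJ : Matrix (Fin 3) (Fin 3) ℝ[X] := !![0, 0, 1; 0, -1, 0; 1, 0, 0]

def PreservesFormJ (M : Matrix (Fin 3) (Fin 3) ℝ[X]) : Prop :=
  (M.map (compRingHom (-X)))ᵀ * formJ * M = formJ

theorem PreservesFormJ.mul {M N : Matrix (Fin 3) (Fin 3) ℝ[X]} (hM : PreservesFormJ M)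
    (hN : PreservesFormJ N) : PreservesFormJ (M * N) := by
  unfold PreservesFormJ at *
  rw [Matrix.map_mul, transpose_mul]
  calc (N.map (compRingHom (-X)))ᵀ * (M.map (compRingHom (-X)))ᵀ * formJ * (M * N)
      = (N.map (compRingHom (-X)))ᵀ * ((M.map (compRingHom (-X)))ᵀ * formJ * M) * N := by
        simp only [Matrix.mul_assoc]
    _ = formJ := by rw [hM, hN]

theorem preservesFormJ_Gmat (μ : ℝ) : PreservesFormJ (Gmat μ) := by
  unfold PreservesFormJ
  ext i j : 1
  fin_cases i <;> fin_cases j <;> simp [Gmat, formJ, Matrix.mul_apply, Fin.sum_univ_three]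

theorem preservesFormJ_Lmat (c : ℝ) : PreservesFormJ (Lmat c) := by
  unfold PreservesFormJ
  ext i j : 1
  refine Polynomial.funext fun z => ?_
  fin_cases i <;> fin_cases j <;> simp [Lmat, formJ, Matrix.mul_apply, Fin.sum_univ_three]
  ring

theorem preservesFormJ_aMat (m l : ℕ → ℝ) (n k : ℕ) : PreservesFormJ (aMat m l n k) := by
  induction k with
  | zero => exact preservesFormJ_Gmat _
  | succ k ih => exact (ih.mul (preservesFormJ_Lmat _)).mul (preservesFormJ_Gmat _)

noncomputable def transTail (m l : ℕ → ℝ) : ℕ → Matrix (Fin 3) (Fin 3) ℝ[X]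
  | 0 => 1
  | j + 1 => Lmat (l (j + 1)) * Gmat (m (j + 1)) * transTail m l j

theorem transMat_succ (m l : ℕ → ℝ) (j : ℕ) :
    transMat m l (j + 1) = Gmat (m (j + 1)) * transTail m l j := by
  induction j with
  | zero => simp [transMat, transTail]
  | succ j ih => simp only [transMat, transTail, ih, Matrix.mul_assoc]

theorem transMat_eq_aMat_mul_transTail (m l : ℕ → ℝ) {n k : ℕ} (hk : k < n) :
    transMat m l n = aMat m l n k * transTail m l (n - 1 - k) := by
  induction k with
  | zero => obtain ⟨n, rfl⟩ := Nat.exists_eq_succ_of_ne_zero hk.ne'; exact transMat_succ m l n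
  | succ k ih =>
    obtain ⟨j, hj⟩ : ∃ j, n - 1 - k = j + 1 := ⟨n - 1 - (k + 1), by omega⟩
    rw [ih (by omega), hj, transTail, aMat, show n - (k + 1) = j + 1 by omega,
      show n - 1 - (k + 1) = j by omega]
    simp only [Matrix.mul_assoc]

theorem natDegree_mul_apply_le {M N : Matrix (Fin 3) (Fin 3) ℝ[X]} {d e : ℕ}
    (hM : ∀ i j, (M i j).natDegree ≤ d) (hN : ∀ i j, (N i j).natDegree ≤ e) (i j : Fin 3) :
    ((M * N) i j).natDegree ≤ d + e := by
  rw [Matrix.mul_apply]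
  exact natDegree_sum_le_of_forall_le _ _ fun t _ =>
    natDegree_mul_le.trans (add_le_add (hM i t) (hN t j))

theorem natDegree_transTail_apply_le (m l : ℕ → ℝ) (j : ℕ) (a b : Fin 3) :
    (transTail m l j a b).natDegree ≤ j := by
  induction j generalizing a b with
  | zero => by_cases h : a = b <;> simp [transTail, Matrix.one_apply, h]
  | succ j ih =>
    have hL (a b : Fin 3) : (Lmat (l (j + 1)) a b).natDegree ≤ 0 := by
      fin_cases a <;> fin_cases b <;> simp [Lmat]
    have hG (a b : Fin 3) : (Gmat (m (j + 1)) a b).natDegree ≤ 1 := by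
      fin_cases a <;> fin_cases b <;> simp [Gmat]
      compute_degree
    have := natDegree_mul_apply_le (natDegree_mul_apply_le hL hG) ih a b
    rw [transTail]
    omega

def FirstColumnDegree (M : Matrix (Fin 3) (Fin 3) ℝ[X]) (j : ℕ) : Prop :=
  (M 0 0).natDegree < j ∧ (M 1 0).natDegree < j ∧ (M 2 0).natDegree = j

theorem FirstColumnDegree.Gmat_mul_Lmat_mul {M : Matrix (Fin 3) (Fin 3) ℝ[X]} {j : ℕ}
    (hM : FirstColumnDegree M j) {μ c : ℝ} (hμ : μ ≠ 0) (hc : c ≠ 0) :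
    FirstColumnDegree (Gmat μ * Lmat c * M) (j + 1) := by
  obtain ⟨h0, h1, h2⟩ := hM
  have hC : (M 0 0 + C c * M 1 0 + C (c ^ 2 / 2) * M 2 0).natDegree = j := by
    rw [natDegree_add_eq_right_of_natDegree_lt] <;> rw [natDegree_C_mul (by positivity), h2]
    exact (natDegree_add_le _ _).trans_lt (max_lt h0 ((natDegree_C_mul_le _ _).trans_lt h1))
  have hC0 : M 0 0 + C c * M 1 0 + C (c ^ 2 / 2) * M 2 0 ≠ 0 :=
    ne_zero_of_natDegree_gt (n := 0) (by omega)
  have hcol : (Gmat μ * Lmat c * M) 0 0 = M 0 0 + C c * M 1 0 + C (c ^ 2 / 2) * M 2 0 ∧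
      (Gmat μ * Lmat c * M) 1 0 = M 1 0 + C c * M 2 0 ∧
      (Gmat μ * Lmat c * M) 2 0 =
        C (-2 * μ) * (M 0 0 + C c * M 1 0 + C (c ^ 2 / 2) * M 2 0) * X + M 2 0 := by
    refine ⟨?_, ?_, ?_⟩ <;> simp [Gmat, Lmat, Matrix.mul_apply, Fin.sum_univ_three]
    ring
  rw [FirstColumnDegree, hcol.1, hcol.2.1, hcol.2.2, hC]
  refine ⟨Nat.lt_succ_self j, ?_, ?_⟩
  · exact (natDegree_add_le _ _).trans_lt
      (max_lt (by omega) ((natDegree_C_mul_le _ _).trans_lt (by omega)))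
  · have hμ' : -2 * μ ≠ 0 := mul_ne_zero (by norm_num) hμ
    rw [natDegree_add_eq_left_of_natDegree_lt] <;>
      rw [natDegree_mul_X (mul_ne_zero (C_ne_zero.mpr hμ') hC0), natDegree_C_mul hμ', hC]
    omega

theorem firstColumnDegree_transMat {m l : ℕ → ℝ} {n : ℕ} (hm : ∀ i, 1 ≤ i → i ≤ n → m i ≠ 0)
    (hl : ∀ i, 1 ≤ i → i < n → l i ≠ 0) {j : ℕ} (hj : 1 ≤ j) (hjn : j ≤ n) :
    FirstColumnDegree (transMat m l j) j := by
  induction j, hj using Nat.le_induction with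
  | base =>
    refine ⟨by simp [transMat.eq_2, Gmat], by simp [transMat.eq_2, Gmat], ?_⟩
    exact natDegree_C_mul_X _ (mul_ne_zero (by norm_num) (hm 1 le_rfl hjn))
  | succ j hj ih =>
    obtain ⟨i, rfl⟩ := Nat.exists_eq_add_of_le' hj
    rw [transMat.eq_3]
    exact (ih (by omega)).Gmat_mul_Lmat_mul (hm _ (by omega) hjn) (hl _ hj (by omega))

theorem natDegree_symmetry_le (m l : ℕ → ℝ) {n k : ℕ} (hk : k < n) (j : Fin 3) :
    ((transMat m l n 0 0).comp (-X) * aMat m l n k 2 j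
      - (transMat m l n 1 0).comp (-X) * aMat m l n k 1 j
      + (transMat m l n 2 0).comp (-X) * aMat m l n k 0 j).natDegree ≤ n - 1 - k := by
  have hS : ((transMat m l n).map (compRingHom (-X)))ᵀ * formJ * aMat m l n k
      = ((transTail m l (n - 1 - k)).map (compRingHom (-X)))ᵀ * formJ := by
    rw [transMat_eq_aMat_mul_transTail m l hk, Matrix.map_mul, transpose_mul, Matrix.mul_assoc,
      Matrix.mul_assoc, ← Matrix.mul_assoc _ formJ, preservesFormJ_aMat]
  have hentry : (transMat m l n 0 0).comp (-X) * aMat m l n k 2 j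
      - (transMat m l n 1 0).comp (-X) * aMat m l n k 1 j
      + (transMat m l n 2 0).comp (-X) * aMat m l n k 0 j
      = (((transMat m l n).map (compRingHom (-X)))ᵀ * formJ * aMat m l n k) 0 j := by
    simp only [formJ, Matrix.mul_apply, Fin.sum_univ_three, transpose_apply, map_apply,
      coe_compRingHom, of_apply, cons_val', cons_val_fin_one, cons_val_zero, cons_val_one, cons_val,
      mul_zero, add_zero, mul_one, zero_add, mul_neg, neg_mul]
    ring
  have hP (a b : Fin 3) :
      (((transTail m l (n - 1 - k)).map (compRingHom (-X)))ᵀ a b).natDegree ≤ n - 1 - k := by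
    simpa [natDegree_comp] using natDegree_transTail_apply_le m l _ b a
  have hJ (a b : Fin 3) : (formJ a b).natDegree ≤ 0 := by
    fin_cases a <;> fin_cases b <;> simp [formJ]
  rw [hentry, hS]
  exact natDegree_mul_apply_le hP hJ 0 j

theorem isBigO_eval_div_eval_atTop {N D : ℝ[X]} {k : ℕ} (h : N.natDegree + k ≤ D.natDegree) :
    (fun x => N.eval x / D.eval x) =O[atTop] fun x => (x ^ k)⁻¹ := by
  rcases eq_or_ne D 0 with rfl | hD
  · simpa using isBigO_zero _ _
  have hdeg : (N * X ^ k).degree ≤ D.degree := by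
    rw [degree_eq_natDegree hD]
    refine degree_le_natDegree.trans (Nat.cast_le.mpr (natDegree_mul_le.trans ?_))
    rwa [natDegree_X_pow]
  obtain ⟨c, hc, hND⟩ := (isBigO_atTop_of_degree_le _ _ hdeg).exists_pos
  refine IsBigO.of_bound c ?_
  filter_upwards [hND.bound, eventually_gt_atTop 0] with x hx hx0
  rcases eq_or_ne (D.eval x) 0 with hDx | hDx
  · simp only [hDx, div_zero, norm_zero]
    positivity
  · simp only [eval_mul, eval_pow, eval_X, norm_mul, norm_div, norm_inv, norm_pow] at hx ⊢
    rw [div_le_iff₀ (norm_pos_iff.mpr hDx)]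
    rw [← le_div_iff₀ (pow_pos (norm_pos_iff.mpr hx0.ne') k)] at hx
    calc ‖N.eval x‖ ≤ c * ‖D.eval x‖ / ‖x‖ ^ k := hx
      _ = c * (‖x‖ ^ k)⁻¹ * ‖D.eval x‖ := by ring

/-- **The symmetry property of the columns of `a(z) = a^{(2k+1)}(z)`:**
`a_{3j} Z* + a_{2j} W* + a_{1j} = O(z^{−(k+1)})` as `z → ∞`, for each column
`j = 1, 2, 3`, where `W*(z) = −W(−z)` and `Z*(z) = Z(−z)` with `W = B/A`,
`Z = C/A`.  (Matrix indices are 0-based.) -/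
theorem stmt13 (n : ℕ) (hn : 2 ≤ n) (x m : ℕ → ℝ)
    (hx : ∀ i, 1 ≤ i → i < n → x i < x (i + 1))
    (hm : ∀ i, 1 ≤ i → i ≤ n → 0 < m i)
    (l : ℕ → ℝ) (hl : ∀ k, l k = x (k + 1) - x k)
    (k : ℕ) (hk : k ≤ n - 1)
    (W Z Ws Zs : ℝ → ℝ)
    (hW : ∀ z, W z = ((transMat m l n).mulVec ![1, 0, 0] 1).eval z
        / ((transMat m l n).mulVec ![1, 0, 0] 2).eval z)
    (hZ : ∀ z, Z z = ((transMat m l n).mulVec ![1, 0, 0] 0).eval z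
        / ((transMat m l n).mulVec ![1, 0, 0] 2).eval z)
    (hWs : ∀ z, Ws z = -W (-z)) (hZs : ∀ z, Zs z = Z (-z))
    (a : Fin 3 → Fin 3 → Polynomial ℝ) (ha : a = aMat m l n k) :
    ∀ j : Fin 3,
      (fun z => (a 2 j).eval z * Zs z + (a 1 j).eval z * Ws z + (a 0 j).eval z)
        =O[atTop] (fun z : ℝ => (z ^ (k + 1))⁻¹) := by
  intro j
  subst ha
  have hA : (transMat m l n 2 0).natDegree = n :=
    (firstColumnDegree_transMat (fun i _ hi => (hm i ‹_› hi).ne')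
      (fun i hi hin => by have := hx i hi hin; rw [hl]; linarith) (by omega) le_rfl).2.2
  have hAσ : ((transMat m l n 2 0).comp (-X)).natDegree = n := by simp [natDegree_comp, hA]
  have hD : (transMat m l n 2 0).comp (-X) ≠ 0 := ne_zero_of_natDegree_gt (n := 0) (by omega)
  have hdeg := Nat.add_le_add_right (natDegree_symmetry_le m l (show k < n by omega) j) (k + 1)
  rw [show n - 1 - k + (k + 1) = n by omega] at hdeg
  refine (isBigO_eval_div_eval_atTop (hdeg.trans hAσ.ge)).congr' ?_ EventuallyEq.rfl
  filter_upwards [eventually_atTop_not_isRoot _ hD] with z hz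
  replace hz : (transMat m l n 2 0).eval (-z) ≠ 0 := by simpa using hz
  simp only [hWs, hZs, hW, hZ, mulVec, dotProduct, Fin.sum_univ_three, cons_val_zero, cons_val_one,
    cons_val, mul_one, mul_zero, add_zero, eval_add, eval_sub, eval_mul, eval_comp, eval_neg, eval_X]
  field_simp
  ring
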